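/- arXiv:nlin/0510044 — 6 statements merged into one kernel-verified Lean document; each statement's English description precedes it below -/
import Mathlib

section
/- Let λ : ℝ → ℝ be continuous, let χ₁, χ₂ : ℝ → ℝ be solutions of the Hill equation χ'' + λ(t)²χ = 0 with χ₁(0) = X₀ > 0, χ₁'(0) = Ẋ₀, χ₂(0) = 0, χ₂'(0) ≠ 0, and let w = χ₁(0)χ₂'(0) − χ₂(0)χ₁'(0). Then X(t) = √(χ₁(t)² + χ₂(t)²/w²) satisfies the Ermakov–Pinney equation X'' + λ(t)²X = 1/X³ with X(0) = X₀ and X'(0) = Ẋ₀, on any interval containing 0 where χ₁² + χ₂²/w² > 0. -/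
/-!
Write `y₂ = χ₂ / w`, again a solution of Hill's equation, so that `X = √(χ₁² + y₂²)` and the
Wronskian of `χ₁, y₂` is `1`. For any two solutions `y₁, y₂` of `y'' + q y = 0` with
Wronskian `W`, the amplitude `R = √(y₁² + y₂²)` satisfies `R R' = p := y₁ y₁' + y₂ y₂'` and
`p' = y₁'² + y₂'² - q R²`, whence `R'' + q R = ((y₁² + y₂²)(y₁'² + y₂'²) - p²) / R³ = W² / R³`
by Lagrange's identity.
-/

open Filter Topology

theorem hasDerivAt_sqrt_sq_add_sq {f g : ℝ → ℝ} {f' g' t : ℝ} (hf : HasDerivAt f f' t)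
    (hg : HasDerivAt g g' t) (h : 0 < f t ^ 2 + g t ^ 2) :
    HasDerivAt (fun s => √(f s ^ 2 + g s ^ 2))
      ((f t * f' + g t * g') / √(f t ^ 2 + g t ^ 2)) t := by
  have hR : √(f t ^ 2 + g t ^ 2) ≠ 0 := (Real.sqrt_pos.mpr h).ne'
  refine (((hf.fun_pow 2).fun_add (hg.fun_pow 2)).sqrt h.ne').congr_deriv ?_
  field_simp
  ring

/-- `y` solves Hill's equation `y'' + q y = 0`, with `y'` its derivative. -/
structure IsHillSolution (q y y' : ℝ → ℝ) : Prop where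
  hasDerivAt : ∀ t, HasDerivAt y (y' t) t
  hasDerivAt_deriv : ∀ t, HasDerivAt y' (-q t * y t) t

namespace IsHillSolution

variable {q y y₁ y₂ y' y₁' y₂' : ℝ → ℝ}

theorem div_const (hy : IsHillSolution q y y') (c : ℝ) :
    IsHillSolution q (fun t => y t / c) (fun t => y' t / c) where
  hasDerivAt t := (hy.hasDerivAt t).div_const c
  hasDerivAt_deriv t := ((hy.hasDerivAt_deriv t).div_const c).congr_deriv (by ring)

theorem wronskian_eq (h₁ : IsHillSolution q y₁ y₁') (h₂ : IsHillSolution q y₂ y₂') (t s : ℝ) :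
    y₁ t * y₂' t - y₂ t * y₁' t = y₁ s * y₂' s - y₂ s * y₁' s := by
  have hW : ∀ r, HasDerivAt (fun r => y₁ r * y₂' r - y₂ r * y₁' r) 0 r := fun r =>
    (((h₁.hasDerivAt r).mul (h₂.hasDerivAt_deriv r)).sub
      ((h₂.hasDerivAt r).mul (h₁.hasDerivAt_deriv r))).congr_deriv (by ring)
  exact is_const_of_deriv_eq_zero (fun r => (hW r).differentiableAt) (fun r => (hW r).deriv) t s

theorem hasDerivAt_mul_add_mul (h₁ : IsHillSolution q y₁ y₁') (h₂ : IsHillSolution q y₂ y₂')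
    (t : ℝ) :
    HasDerivAt (fun s => y₁ s * y₁' s + y₂ s * y₂' s)
      (y₁' t ^ 2 + y₂' t ^ 2 - q t * (y₁ t ^ 2 + y₂ t ^ 2)) t :=
  (((h₁.hasDerivAt t).mul (h₁.hasDerivAt_deriv t)).add
    ((h₂.hasDerivAt t).mul (h₂.hasDerivAt_deriv t))).congr_deriv (by ring)

theorem deriv_deriv_sqrt_sq_add_sq (h₁ : IsHillSolution q y₁ y₁') (h₂ : IsHillSolution q y₂ y₂')
    {t : ℝ} (ht : 0 < y₁ t ^ 2 + y₂ t ^ 2) :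
    deriv (deriv fun s => √(y₁ s ^ 2 + y₂ s ^ 2)) t + q t * √(y₁ t ^ 2 + y₂ t ^ 2) =
      (y₁ t * y₂' t - y₂ t * y₁' t) ^ 2 / √(y₁ t ^ 2 + y₂ t ^ 2) ^ 3 := by
  have hR' (s) (hs : 0 < y₁ s ^ 2 + y₂ s ^ 2) :=
    hasDerivAt_sqrt_sq_add_sq (h₁.hasDerivAt s) (h₂.hasDerivAt s) hs
  have hpos : ∀ᶠ s in 𝓝 t, 0 < y₁ s ^ 2 + y₂ s ^ 2 :=
    (((h₁.hasDerivAt t).continuousAt.pow 2).add ((h₂.hasDerivAt t).continuousAt.pow 2)).eventually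
      (lt_mem_nhds ht)
  have hderiv : deriv (fun s => √(y₁ s ^ 2 + y₂ s ^ 2)) =ᶠ[𝓝 t]
      fun s => (y₁ s * y₁' s + y₂ s * y₂' s) / √(y₁ s ^ 2 + y₂ s ^ 2) :=
    hpos.mono fun s hs => (hR' s hs).deriv
  have hR0 : √(y₁ t ^ 2 + y₂ t ^ 2) ≠ 0 := (Real.sqrt_pos.mpr ht).ne'
  rw [hderiv.deriv_eq, ((hasDerivAt_mul_add_mul h₁ h₂ t).fun_div (hR' t ht) hR0).deriv]
  have hR2 : √(y₁ t ^ 2 + y₂ t ^ 2) ^ 2 = y₁ t ^ 2 + y₂ t ^ 2 := Real.sq_sqrt ht.le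
  generalize √(y₁ t ^ 2 + y₂ t ^ 2) = R at hR0 hR2 ⊢
  field_simp
  -- after substituting `R² = y₁² + y₂²` this is Lagrange's identity
  linear_combination (y₁' t ^ 2 + y₂' t ^ 2 + q t * R ^ 2) * hR2

end IsHillSolution

theorem ermakov_nonlinear_superposition_general
    (lam : ℝ → ℝ)
    (χ₁ χ₂ χ₁' χ₂' : ℝ → ℝ) (X₀ Xd₀ : ℝ) (hX₀ : 0 < X₀)
    (h₁ : ∀ t, HasDerivAt χ₁ (χ₁' t) t)
    (h₁' : ∀ t, HasDerivAt χ₁' (-(lam t) ^ 2 * χ₁ t) t)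
    (h₂ : ∀ t, HasDerivAt χ₂ (χ₂' t) t)
    (h₂' : ∀ t, HasDerivAt χ₂' (-(lam t) ^ 2 * χ₂ t) t)
    (hi1 : χ₁ 0 = X₀) (hi1' : χ₁' 0 = Xd₀)
    (hi2 : χ₂ 0 = 0) (hi2' : χ₂' 0 ≠ 0)
    (w : ℝ) (hw : w = χ₁ 0 * χ₂' 0 - χ₂ 0 * χ₁' 0)
    (X : ℝ → ℝ) (hX : ∀ t, X t = Real.sqrt (χ₁ t ^ 2 + χ₂ t ^ 2 / w ^ 2)) :
    X 0 = X₀ ∧ deriv X 0 = Xd₀ ∧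
    ∀ a b : ℝ, a < 0 → 0 < b →
      (∀ t ∈ Set.Ioo a b, 0 < χ₁ t ^ 2 + χ₂ t ^ 2 / w ^ 2) →
      ∀ t ∈ Set.Ioo a b,
        deriv (deriv X) t + (lam t) ^ 2 * X t = 1 / (X t) ^ 3 := by
  have hw0 : w ≠ 0 := by
    rw [hw, hi1, hi2]
    simpa using mul_ne_zero hX₀.ne' hi2'
  have hy₁ : IsHillSolution (fun t => lam t ^ 2) χ₁ χ₁' := ⟨h₁, h₁'⟩
  have hy₂ := (IsHillSolution.mk (q := fun t => lam t ^ 2) h₂ h₂').div_const w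
  have hXeq : X = fun t => √(χ₁ t ^ 2 + (χ₂ t / w) ^ 2) := funext fun t => by rw [hX, div_pow]
  have hW (t : ℝ) : χ₁ t * (χ₂' t / w) - χ₂ t / w * χ₁' t = 1 := by
    rw [hy₁.wronskian_eq hy₂ t 0]
    field_simp
    exact hw.symm
  have hpos0 : 0 < χ₁ 0 ^ 2 + (χ₂ 0 / w) ^ 2 := by
    rw [hi1, hi2]
    positivity
  refine ⟨by simp [hX, hi1, hi2, Real.sqrt_sq hX₀.le], ?_, fun a b _ _ hpos t ht => ?_⟩
  · rw [hXeq, (hasDerivAt_sqrt_sq_add_sq (h₁ 0) (hy₂.hasDerivAt 0) hpos0).deriv]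
    simp [hi1, hi1', hi2, Real.sqrt_sq hX₀.le, hX₀.ne']
  · have := hy₁.deriv_deriv_sqrt_sq_add_sq hy₂ (t := t) (by rw [div_pow]; exact hpos t ht)
    rw [hXeq]
    simpa [hW t] using this

/-- Nonlinear superposition (Ermakov 1880): from two solutions of Hill's equation,
`X = √(χ₁² + χ₂²/w²)` solves the Ermakov–Pinney equation `X'' + λ(t)² X = 1/X³`. -/
theorem ermakov_nonlinear_superposition
    (lam : ℝ → ℝ) (hlam : Continuous lam)
    (χ₁ χ₂ χ₁' χ₂' : ℝ → ℝ) (X₀ Xd₀ : ℝ) (hX₀ : 0 < X₀)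
    (h₁ : ∀ t, HasDerivAt χ₁ (χ₁' t) t)
    (h₁' : ∀ t, HasDerivAt χ₁' (-(lam t) ^ 2 * χ₁ t) t)
    (h₂ : ∀ t, HasDerivAt χ₂ (χ₂' t) t)
    (h₂' : ∀ t, HasDerivAt χ₂' (-(lam t) ^ 2 * χ₂ t) t)
    (hi1 : χ₁ 0 = X₀) (hi1' : χ₁' 0 = Xd₀)
    (hi2 : χ₂ 0 = 0) (hi2' : χ₂' 0 ≠ 0)
    (w : ℝ) (hw : w = χ₁ 0 * χ₂' 0 - χ₂ 0 * χ₁' 0)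
    (X : ℝ → ℝ) (hX : ∀ t, X t = Real.sqrt (χ₁ t ^ 2 + χ₂ t ^ 2 / w ^ 2)) :
    X 0 = X₀ ∧ deriv X 0 = Xd₀ ∧
    ∀ a b : ℝ, a < 0 → 0 < b →
      (∀ t ∈ Set.Ioo a b, 0 < χ₁ t ^ 2 + χ₂ t ^ 2 / w ^ 2) →
      ∀ t ∈ Set.Ioo a b,
        deriv (deriv X) t + (lam t) ^ 2 * X t = 1 / (X t) ^ 3 :=
  ermakov_nonlinear_superposition_general lam χ₁ χ₂ χ₁' χ₂' X₀ Xd₀ hX₀ h₁ h₁' h₂ h₂' hi1 hi1' hi2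
    hi2' w hw X hX
end

section
/- Let λ : ℝ → ℝ be continuous and let I, V, E : ℝ → ℝ be differentiable functions satisfying the system I' = V, V' = 4E − 2λ(t)²I, E' = −(1/2)λ(t)²V. Then the quantity Q(t) = 2E(t)I(t) − V(t)²/4 is constant in time. -/
theorem hasDerivAt_moment_invariant_zero {I V E : ℝ → ℝ} {c t : ℝ}
    (hI : HasDerivAt I (V t) t)
    (hV : HasDerivAt V (4 * E t - 2 * c * I t) t)
    (hE : HasDerivAt E (-(1 / 2) * c * V t) t) :
    HasDerivAt (fun t => 2 * E t * I t - (V t) ^ 2 / 4) 0 t := by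
  refine (((hE.const_mul 2).mul hI).sub ((hV.pow 2).div_const 4)).congr_deriv ?_
  norm_num
  ring

theorem moment_invariant_Q_general
    (lam : ℝ → ℝ)
    (I V E : ℝ → ℝ)
    (hI : ∀ t, HasDerivAt I (V t) t)
    (hV : ∀ t, HasDerivAt V (4 * E t - 2 * (lam t) ^ 2 * I t) t)
    (hE : ∀ t, HasDerivAt E (-(1 / 2) * (lam t) ^ 2 * V t) t) :
    ∀ s t : ℝ, 2 * E s * I s - (V s) ^ 2 / 4 = 2 * E t * I t - (V t) ^ 2 / 4 := by
  have hQ t := hasDerivAt_moment_invariant_zero (hI t) (hV t) (hE t)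
  exact is_const_of_deriv_eq_zero (fun t => (hQ t).differentiableAt) (fun t => (hQ t).deriv)

/-- The quantity `Q = 2EI − V²/4` is a dynamical invariant of the closed moment system
`I' = V`, `V' = 4E − 2λ(t)²I`, `E' = −(1/2)λ(t)²V`. -/
theorem moment_invariant_Q
    (lam : ℝ → ℝ) (hlam : Continuous lam)
    (I V E : ℝ → ℝ)
    (hI : ∀ t, HasDerivAt I (V t) t)
    (hV : ∀ t, HasDerivAt V (4 * E t - 2 * (lam t) ^ 2 * I t) t)
    (hE : ∀ t, HasDerivAt E (-(1 / 2) * (lam t) ^ 2 * V t) t) :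
    ∀ s t : ℝ, 2 * E s * I s - (V s) ^ 2 / 4 = 2 * E t * I t - (V t) ^ 2 / 4 :=
  moment_invariant_Q_general lam I V E hI hV hE
end

section
/- Let λ : ℝ → ℝ be continuous and let I, V, E : ℝ → ℝ satisfy I' = V, V' = 4E − 2λ(t)²I, E' = −(1/2)λ(t)²V, with Q = 2EI − V²/4 a nonzero constant and I(t) > 0 for all t. Then the function X(t) = |Q|^{−1/4} I(t)^{1/2} satisfies X'' + λ(t)²X = sgn(Q)/X³. -/
/-!
Writing `S = √I`, the moment equations give `S'' + λ² S = (2 E I - V² / 4) / S³ = Q / S³`.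
Rescaling by `c = |Q|^{-1/4}` turns `Q / S³` into `c⁴ Q / (c S)³`, and `c⁴ Q = sgn Q`.
-/

open Real

theorem hasDerivAt_deriv_sqrt {I V : ℝ → ℝ} {W t : ℝ} (hI : ∀ s, HasDerivAt I (V s) s)
    (hV : HasDerivAt V W t) (hIpos : ∀ s, 0 < I s) :
    HasDerivAt (deriv fun s => √(I s)) (W / (2 * √(I t)) - V t ^ 2 / (4 * √(I t) ^ 3)) t := by
  have hderiv : deriv (fun s => √(I s)) = fun s => V s / (2 * √(I s)) :=
    funext fun s => ((hI s).sqrt (hIpos s).ne').deriv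
  have hS : 0 < √(I t) := sqrt_pos.2 (hIpos t)
  rw [hderiv]
  refine (hV.div (((hI t).sqrt (hIpos t).ne').const_mul 2) (by positivity)).congr_deriv ?_
  field_simp
  ring

theorem sqrt_ermakov_pinney {I V E ω : ℝ → ℝ} {Q t : ℝ} (hI : ∀ s, HasDerivAt I (V s) s)
    (hV : HasDerivAt V (4 * E t - 2 * ω t * I t) t) (hIpos : ∀ s, 0 < I s)
    (hQ : 2 * E t * I t - V t ^ 2 / 4 = Q) :
    deriv (deriv fun s => √(I s)) t + ω t * √(I t) = Q / √(I t) ^ 3 := by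
  rw [(hasDerivAt_deriv_sqrt hI hV hIpos).deriv, ← hQ]
  have hS : 0 < √(I t) := sqrt_pos.2 (hIpos t)
  set S := √(I t) with hS_def
  rw [← sq_sqrt (hIpos t).le, ← hS_def]
  field_simp
  ring

theorem ermakov_pinney_const_mul {y ω : ℝ → ℝ} {Q t : ℝ} (c : ℝ)
    (hy : deriv (deriv y) t + ω t * y t = Q / y t ^ 3) :
    deriv (deriv fun s => c * y s) t + ω t * (c * y t) = c ^ 4 * Q / (c * y t) ^ 3 := by
  simp only [deriv_const_mul_field']
  rcases eq_or_ne c 0 with rfl | hc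
  · simp
  · rw [mul_pow, mul_div_mul_comm, pow_succ, mul_div_cancel_left₀ c (pow_ne_zero 3 hc), ← hy]
    ring

theorem abs_rpow_neg_quarter_pow_four_mul_eq_sign (Q : ℝ) :
    (|Q| ^ (-(1 / 4 : ℝ))) ^ 4 * Q = Real.sign Q := by
  rw [← rpow_natCast, ← rpow_mul (abs_nonneg Q), show -(1 / 4 : ℝ) * (4 : ℕ) = -1 by norm_num,
    rpow_neg_one]
  rcases lt_trichotomy Q 0 with hQ | rfl | hQ
  · rw [abs_of_neg hQ, sign_of_neg hQ, inv_neg, neg_mul, inv_mul_cancel₀ hQ.ne]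
  · simp
  · rw [abs_of_pos hQ, sign_of_pos hQ, inv_mul_cancel₀ hQ.ne']

theorem moment_reduction_ermakov_pinney_general
    (lam : ℝ → ℝ)
    (I V E : ℝ → ℝ)
    (hI : ∀ t, HasDerivAt I (V t) t)
    (hV : ∀ t, HasDerivAt V (4 * E t - 2 * (lam t) ^ 2 * I t) t)
    (Q : ℝ)
    (hQ : ∀ t, 2 * E t * I t - (V t) ^ 2 / 4 = Q)
    (hIpos : ∀ t, 0 < I t)
    (X : ℝ → ℝ) (hX : ∀ t, X t = |Q| ^ (-(1 / 4 : ℝ)) * (I t) ^ ((1 / 2 : ℝ))) :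
    ∀ t, deriv (deriv X) t + (lam t) ^ 2 * X t = Real.sign Q / (X t) ^ 3 := by
  intro t
  have hX_sqrt : X = fun s => |Q| ^ (-(1 / 4 : ℝ)) * √(I s) :=
    funext fun s => by rw [hX, sqrt_eq_rpow]
  rw [hX_sqrt, ← abs_rpow_neg_quarter_pow_four_mul_eq_sign]
  exact ermakov_pinney_const_mul (y := fun s => √(I s)) (ω := fun s => lam s ^ 2) _
    (sqrt_ermakov_pinney (ω := fun s => lam s ^ 2) hI (hV t) hIpos (hQ t))

/-- Reduction of the closed moment system to the Ermakov–Pinney equation: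
`X = |Q|^{-1/4} I^{1/2}` satisfies `X'' + λ(t)²X = sgn(Q)/X³`. -/
theorem moment_reduction_ermakov_pinney
    (lam : ℝ → ℝ) (hlam : Continuous lam)
    (I V E : ℝ → ℝ)
    (hI : ∀ t, HasDerivAt I (V t) t)
    (hV : ∀ t, HasDerivAt V (4 * E t - 2 * (lam t) ^ 2 * I t) t)
    (hE : ∀ t, HasDerivAt E (-(1 / 2) * (lam t) ^ 2 * V t) t)
    (Q : ℝ) (hQne : Q ≠ 0)
    (hQ : ∀ t, 2 * E t * I t - (V t) ^ 2 / 4 = Q)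
    (hIpos : ∀ t, 0 < I t)
    (X : ℝ → ℝ) (hX : ∀ t, X t = |Q| ^ (-(1 / 4 : ℝ)) * (I t) ^ ((1 / 2 : ℝ))) :
    ∀ t, deriv (deriv X) t + (lam t) ^ 2 * X t = Real.sign Q / (X t) ^ 3 :=
  moment_reduction_ermakov_pinney_general lam I V E hI hV Q hQ hIpos X hX
end

section
/- Let n ≥ 1, p > 0, g₀ : ℝ → ℝ positive and differentiable, λ : ℝ → ℝ continuous, and let I, V, K, J, β : ℝ → ℝ be differentiable with I > 0 and satisfy: I' = V, V' = 4(K + (np/4)J) − 2λ²I, K' = −(1/2)λ²V + npβJ, J' = −npβJ + (g₀'/g₀)J, together with the constraint V = 4βI. Then Q₁ := 2KI − V²/4 and Q₂ := (np/(2g₀))·I^{np/4}·J are constant in time. -/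
/-!
Both invariants are checked by differentiating. For `Q₁ = 2KI − V²/4` the `λ²` terms cancel and
what remains, `2npβJ·I − npJ·V/2`, vanishes by the constraint `V = 4βI`. For `Q₂` the logarithmic
derivative of `I^{np/4} J / g₀` is `(np/4)·V/I + J'/J − g₀'/g₀`, which is zero once `J'/J` is
rewritten through `V/I = 4β`.
-/

theorem eq_of_forall_hasDerivAt_zero {𝕜 G : Type*} [RCLike 𝕜] [NormedAddCommGroup G]
    [NormedSpace 𝕜 G] {f : 𝕜 → G} (hf : ∀ x, HasDerivAt f 0 x) (x y : 𝕜) : f x = f y :=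
  is_const_of_deriv_eq_zero (fun z => (hf z).differentiableAt) (fun z => (hf z).deriv) x y

theorem hasDerivAt_two_mul_mul_sub_sq_div_four_zero {I V K J : ℝ → ℝ} {q ω β t : ℝ}
    (hI : HasDerivAt I (V t) t)
    (hV : HasDerivAt V (4 * (K t + q / 4 * J t) - 2 * ω * I t) t)
    (hK : HasDerivAt K (-(1 / 2) * ω * V t + q * β * J t) t)
    (hβ : V t = 4 * β * I t) :
    HasDerivAt (fun t => 2 * K t * I t - V t ^ 2 / 4) 0 t := by
  refine (((hK.const_mul 2).mul hI).sub ((hV.pow 2).div_const 4)).congr_deriv ?_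
  linear_combination -(q / 2 * J t) * hβ

theorem hasDerivAt_rpow_mul_div_zero {I J g : ℝ → ℝ} {I' g' c t : ℝ}
    (hI : HasDerivAt I I' t) (hIt : I t ≠ 0)
    (hJ : HasDerivAt J ((g' / g t - c * I' / I t) * J t) t)
    (hg : HasDerivAt g g' t) (hgt : g t ≠ 0) :
    HasDerivAt (fun t => I t ^ c * J t / g t) 0 t := by
  refine (((hI.rpow_const (Or.inl hIt)).mul hJ).div hg hgt).congr_deriv ?_
  rw [Pi.mul_apply, Real.rpow_sub_one hIt c]
  field_simp
  ring

theorem qpa_moment_invariants_general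
    (n : ℕ) (p : ℝ)
    (g₀ g₀' : ℝ → ℝ) (hg₀pos : ∀ t, 0 < g₀ t)
    (hg₀ : ∀ t, HasDerivAt g₀ (g₀' t) t)
    (lam : ℝ → ℝ)
    (I V K J β : ℝ → ℝ) (hIpos : ∀ t, 0 < I t)
    (hI : ∀ t, HasDerivAt I (V t) t)
    (hV : ∀ t, HasDerivAt V (4 * (K t + ((n : ℝ) * p / 4) * J t) - 2 * (lam t) ^ 2 * I t) t)
    (hK : ∀ t, HasDerivAt K (-(1 / 2) * (lam t) ^ 2 * V t + (n : ℝ) * p * β t * J t) t)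
    (hJ : ∀ t, HasDerivAt J (-(n : ℝ) * p * β t * J t + (g₀' t / g₀ t) * J t) t)
    (hβ : ∀ t, V t = 4 * β t * I t) :
    ∀ s t : ℝ,
      (2 * K s * I s - (V s) ^ 2 / 4 = 2 * K t * I t - (V t) ^ 2 / 4) ∧
      ((n : ℝ) * p / (2 * g₀ s) * (I s) ^ ((n : ℝ) * p / 4) * J s
        = (n : ℝ) * p / (2 * g₀ t) * (I t) ^ ((n : ℝ) * p / 4) * J t) := by
  intro s t
  have hJ_logDeriv : ∀ t, HasDerivAt J
      ((g₀' t / g₀ t - (n : ℝ) * p / 4 * V t / I t) * J t) t := fun t =>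
    (hJ t).congr_deriv (by rw [hβ t]; field_simp [(hIpos t).ne']; ring)
  have hQ₂ : ∀ t, (n : ℝ) * p / (2 * g₀ t) * I t ^ ((n : ℝ) * p / 4) * J t
      = (n : ℝ) * p / 2 * (I t ^ ((n : ℝ) * p / 4) * J t / g₀ t) := fun t => by ring
  refine ⟨eq_of_forall_hasDerivAt_zero
    (fun t => hasDerivAt_two_mul_mul_sub_sq_div_four_zero (hI t) (hV t) (hK t) (hβ t)) s t, ?_⟩
  rw [hQ₂, hQ₂, eq_of_forall_hasDerivAt_zero (fun t => hasDerivAt_rpow_mul_div_zero (hI t)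
    (hIpos t).ne' (hJ_logDeriv t) (hg₀ t) (hg₀pos t).ne') s t]

/-- Invariants of the quadratic-phase moment system for modulated power nonlinearities:
`Q₁ = 2KI − V²/4` and `Q₂ = (np/(2g₀))·I^{np/4}·J` are constant in time. -/
theorem qpa_moment_invariants
    (n : ℕ) (hn : 1 ≤ n) (p : ℝ) (hp : 0 < p)
    (g₀ g₀' : ℝ → ℝ) (hg₀pos : ∀ t, 0 < g₀ t)
    (hg₀ : ∀ t, HasDerivAt g₀ (g₀' t) t)
    (lam : ℝ → ℝ) (hlam : Continuous lam)
    (I V K J β : ℝ → ℝ) (hIpos : ∀ t, 0 < I t)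
    (hI : ∀ t, HasDerivAt I (V t) t)
    (hV : ∀ t, HasDerivAt V (4 * (K t + ((n : ℝ) * p / 4) * J t) - 2 * (lam t) ^ 2 * I t) t)
    (hK : ∀ t, HasDerivAt K (-(1 / 2) * (lam t) ^ 2 * V t + (n : ℝ) * p * β t * J t) t)
    (hJ : ∀ t, HasDerivAt J (-(n : ℝ) * p * β t * J t + (g₀' t / g₀ t) * J t) t)
    (hβ : ∀ t, V t = 4 * β t * I t) :
    ∀ s t : ℝ,
      (2 * K s * I s - (V s) ^ 2 / 4 = 2 * K t * I t - (V t) ^ 2 / 4) ∧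
      ((n : ℝ) * p / (2 * g₀ s) * (I s) ^ ((n : ℝ) * p / 4) * J s
        = (n : ℝ) * p / (2 * g₀ t) * (I t) ^ ((n : ℝ) * p / 4) * J t) :=
  qpa_moment_invariants_general n p g₀ g₀' hg₀pos hg₀ lam I V K J β hIpos hI hV hK hJ hβ
end

section
/- Under the hypotheses of the quadratic-phase moment system (I' = V, V' = 4(K + (np/4)J) − 2λ²I, K' = −(1/2)λ²V + npβJ, J' = −npβJ + (g₀'/g₀)J, V = 4βI, I > 0), the function X := I^{1/2} satisfies X'' + λ(t)²X = Q₁/X³ + g₀(t)·Q₂/X^{np/2+1}, where Q₁ = 2KI − V²/4 and Q₂ = (np/(2g₀))I^{np/4}J are the (constant) invariants of the system. -/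
/-!
Since `X = √I`, the chain rule gives `X'' = I''/(2X) - I'²/(4X³)`. Substituting
`I'' = V' = 4K + npJ - 2λ²I` and `I' = V` and regrouping, the `K`- and `V`-terms combine into
`(2KI - V²/4)/X³ = Q₁/X³`, while `npJ/(2X) = g₀ Q₂ / X^{np/2+1}` because
`X^{np/2+1} = I^{np/4} X`.
-/

open Real

theorem deriv_deriv_sqrt {I V : ℝ → ℝ} {A t : ℝ} (hpos : ∀ u, 0 < I u)
    (hI : ∀ u, HasDerivAt I (V u) u) (hV : HasDerivAt V A t) :
    deriv (deriv fun u => √(I u)) t = A / (2 * √(I t)) - V t ^ 2 / (4 * √(I t) ^ 3) := by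
  have hsqrt : ∀ u, √(I u) ≠ 0 := fun u => (sqrt_pos.2 (hpos u)).ne'
  have hderiv : deriv (fun u => √(I u)) = fun u => V u / (2 * √(I u)) :=
    funext fun u => ((hI u).sqrt (hpos u).ne').deriv
  have hquot : HasDerivAt (fun u => V u / (2 * √(I u))) _ t :=
    hV.div (((hI t).sqrt (hpos t).ne').const_mul 2) (mul_ne_zero two_ne_zero (hsqrt t))
  rw [hderiv, hquot.deriv]
  field_simp [hsqrt t]
  ring

theorem sqrt_rpow_div_two_add_one {x : ℝ} (hx : 0 < x) (r : ℝ) :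
    √x ^ (r / 2 + 1) = x ^ (r / 4) * √x := by
  rw [← rpow_div_two_eq_sqrt _ hx.le, sqrt_eq_rpow, ← rpow_add hx]
  ring_nf

theorem qpa_width_equation_general
    (n : ℕ) (p : ℝ)
    (g₀ : ℝ → ℝ) (hg₀pos : ∀ t, 0 < g₀ t)
    (lam : ℝ → ℝ)
    (I V K J : ℝ → ℝ) (hIpos : ∀ t, 0 < I t)
    (hI : ∀ t, HasDerivAt I (V t) t)
    (hV : ∀ t, HasDerivAt V (4 * (K t + ((n : ℝ) * p / 4) * J t) - 2 * (lam t) ^ 2 * I t) t)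
    (Q₁ Q₂ : ℝ)
    (hQ₁ : ∀ t, 2 * K t * I t - (V t) ^ 2 / 4 = Q₁)
    (hQ₂ : ∀ t, (n : ℝ) * p / (2 * g₀ t) * (I t) ^ ((n : ℝ) * p / 4) * J t = Q₂)
    (X : ℝ → ℝ) (hX : ∀ t, X t = (I t) ^ ((1 : ℝ) / 2)) :
    ∀ t, deriv (deriv X) t + (lam t) ^ 2 * X t
      = Q₁ / (X t) ^ 3 + g₀ t * Q₂ / (X t) ^ ((n : ℝ) * p / 2 + 1) := by
  intro t
  obtain rfl : X = fun u => √(I u) := funext fun u => by rw [hX, sqrt_eq_rpow]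
  beta_reduce
  rw [deriv_deriv_sqrt hIpos hI (hV t), sqrt_rpow_div_two_add_one (hIpos t), ← hQ₁ t, ← hQ₂ t]
  have hw : 0 < I t ^ ((n : ℝ) * p / 4) := rpow_pos_of_pos (hIpos t) _
  have hs : 0 < √(I t) := sqrt_pos.2 (hIpos t)
  have hsq : √(I t) ^ 2 = I t := sq_sqrt (hIpos t).le
  generalize I t ^ ((n : ℝ) * p / 4) = w at hw ⊢
  generalize √(I t) = s at hs hsq ⊢
  rw [← hsq]
  field_simp [(hg₀pos t).ne']
  ring

/-- Reduction of the quadratic-phase moment system to a generalized Ermakov–Pinney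
equation for the width `X = I^{1/2}`:
`X'' + λ(t)²X = Q₁/X³ + g₀(t)·Q₂/X^{np/2+1}`. -/
theorem qpa_width_equation
    (n : ℕ) (hn : 1 ≤ n) (p : ℝ) (hp : 0 < p)
    (g₀ g₀' : ℝ → ℝ) (hg₀pos : ∀ t, 0 < g₀ t)
    (hg₀ : ∀ t, HasDerivAt g₀ (g₀' t) t)
    (lam : ℝ → ℝ) (hlam : Continuous lam)
    (I V K J β : ℝ → ℝ) (hIpos : ∀ t, 0 < I t)
    (hI : ∀ t, HasDerivAt I (V t) t)
    (hV : ∀ t, HasDerivAt V (4 * (K t + ((n : ℝ) * p / 4) * J t) - 2 * (lam t) ^ 2 * I t) t)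
    (hK : ∀ t, HasDerivAt K (-(1 / 2) * (lam t) ^ 2 * V t + (n : ℝ) * p * β t * J t) t)
    (hJ : ∀ t, HasDerivAt J (-(n : ℝ) * p * β t * J t + (g₀' t / g₀ t) * J t) t)
    (hβ : ∀ t, V t = 4 * β t * I t)
    (Q₁ Q₂ : ℝ)
    (hQ₁ : ∀ t, 2 * K t * I t - (V t) ^ 2 / 4 = Q₁)
    (hQ₂ : ∀ t, (n : ℝ) * p / (2 * g₀ t) * (I t) ^ ((n : ℝ) * p / 4) * J t = Q₂)
    (X : ℝ → ℝ) (hX : ∀ t, X t = (I t) ^ ((1 : ℝ) / 2)) :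
    ∀ t, deriv (deriv X) t + (lam t) ^ 2 * X t
      = Q₁ / (X t) ^ 3 + g₀ t * Q₂ / (X t) ^ ((n : ℝ) * p / 2 + 1) :=
  qpa_width_equation_general n p g₀ hg₀pos lam I V K J hIpos hI hV Q₁ Q₂ hQ₁ hQ₂ X hX
end

section
/- For the cubic–quintic closure, i.e., moment system I' = V, V' = 4K − 2λ²I − 2nF, K' = −(1/2)λ²V − 2nβF, J' = 2nβF, F' = 2nβ(1 + aF)F + 2nβaJ·J with aF = −4, aJ = −2, constraint V = 4βI and I > 0, the quantities Q₁ = 2KI − V²/4, Q₊ = 2nIⁿ(J + F), Q₋ = 2nI^{n/2}(J + F/2) are conserved, and X := I^{1/2} satisfies X'' + λ(t)²X = Q₁/X³ + Q₋/X^{n+1} − Q₊/X^{2n+1}. -/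
/-!
The quantity `2KI − V²/4` has derivative `nF(V − 4βI)`, which vanishes by the constraint
`V = 4βI`. The same constraint gives `(Iᵖ)' = 4pβIᵖ`, so for the cubic–quintic coefficients
`(Iᵖ(J + cF))' = Iᵖβ(4(p − nc)J + (4pc + 2n − 6nc)F)`; this vanishes for `p = nc` exactly when
`2c² − 3c + 1 = 0`, i.e. for `c = 1` and `c = 1/2`, which are `Q₊` and `Q₋`.
For the width, `X = √I` satisfies `X'' + λ²X = Q₁/X³ − nF/X`, and
`−nF/X = Q₋/X^{n+1} − Q₊/X^{2n+1}` since `X^n = I^{n/2}` and `X^{2n} = Iⁿ`.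
-/

open Real

theorem eq_of_hasDerivAt_zero {f : ℝ → ℝ} (hf : ∀ t, HasDerivAt f 0 t) (s t : ℝ) :
    f s = f t :=
  is_const_of_deriv_eq_zero (fun x => (hf x).differentiableAt) (fun x => (hf x).deriv) s t

theorem Real.sqrt_pow_eq_rpow {x : ℝ} (hx : 0 ≤ x) (n : ℕ) : √x ^ n = x ^ ((n : ℝ) / 2) := by
  rw [sqrt_eq_rpow, ← rpow_natCast, ← rpow_mul hx]
  ring_nf

theorem Real.sqrt_pow_two_mul {x : ℝ} (hx : 0 ≤ x) (n : ℕ) : √x ^ (2 * n) = x ^ n := by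
  rw [pow_mul, sq_sqrt hx]

theorem HasDerivAt.rpow_const_of_hasDerivAt_mul_self {I : ℝ → ℝ} {b t : ℝ} (p : ℝ)
    (hIpos : 0 < I t) (hI : HasDerivAt I (b * I t) t) :
    HasDerivAt (fun s => I s ^ p) (p * b * I t ^ p) t := by
  refine (hI.rpow_const (p := p) (Or.inl hIpos.ne')).congr_deriv ?_
  rw [rpow_sub_one hIpos.ne']
  field_simp

section MomentSystem

variable {a : ℝ} {lam I V K F β : ℝ → ℝ}

theorem hasDerivAt_ermakov_invariant_eq_zero
    (hI : ∀ t, HasDerivAt I (V t) t)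
    (hV : ∀ t, HasDerivAt V (4 * K t - 2 * (lam t) ^ 2 * I t - 2 * a * F t) t)
    (hK : ∀ t, HasDerivAt K (-(1 / 2) * (lam t) ^ 2 * V t - 2 * a * β t * F t) t)
    (hβ : ∀ t, V t = 4 * β t * I t) (t : ℝ) :
    HasDerivAt (fun t => 2 * K t * I t - (V t) ^ 2 / 4) 0 t := by
  refine ((((hK t).const_mul 2).mul (hI t)).sub (((hV t).pow 2).div_const 4)).congr_deriv ?_
  linear_combination (a * F t) * hβ t

theorem hasDerivAt_rpow_mul_add_eq_zero {J : ℝ → ℝ} {p c : ℝ} (hp : p = a * c)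
    (hc : 2 * c ^ 2 - 3 * c + 1 = 0) (hIpos : ∀ t, 0 < I t)
    (hI : ∀ t, HasDerivAt I (V t) t)
    (hJ : ∀ t, HasDerivAt J (2 * a * β t * F t) t)
    (hF : ∀ t, HasDerivAt F
      (2 * a * β t * (1 + (-4 : ℝ)) * F t + 2 * a * β t * (-2 : ℝ) * J t) t)
    (hβ : ∀ t, V t = 4 * β t * I t) (t : ℝ) :
    HasDerivAt (fun t => I t ^ p * (J t + c * F t)) 0 t := by
  have hIp := HasDerivAt.rpow_const_of_hasDerivAt_mul_self p (hIpos t) (hβ t ▸ hI t)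
  refine (hIp.mul ((hJ t).add ((hF t).const_mul c))).congr_deriv ?_
  subst hp
  simp only [Pi.add_apply]
  linear_combination (2 * a * β t * F t * I t ^ (a * c)) * hc

theorem width_equation {N : ℝ → ℝ} (hIpos : ∀ t, 0 < I t)
    (hI : ∀ t, HasDerivAt I (V t) t)
    (hV : ∀ t, HasDerivAt V (4 * K t - 2 * (lam t) ^ 2 * I t + N t) t) (t : ℝ) :
    deriv (deriv fun s => √(I s)) t + (lam t) ^ 2 * √(I t)
      = (2 * K t * I t - (V t) ^ 2 / 4) / √(I t) ^ 3 + N t / (2 * √(I t)) := by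
  have hsqrt : ∀ s, √(I s) ≠ 0 := fun s => (sqrt_pos.2 (hIpos s)).ne'
  have hX' : deriv (fun s => √(I s)) = fun s => V s / (2 * √(I s)) :=
    funext fun s => ((hI s).sqrt (hIpos s).ne').deriv
  have hX'' : HasDerivAt (fun s => V s / (2 * √(I s))) _ t :=
    (hV t).div (((hI t).sqrt (hIpos t).ne').const_mul 2) (mul_ne_zero two_ne_zero (hsqrt t))
  rw [hX', hX''.deriv]
  have hX : √(I t) ^ 2 = I t := sq_sqrt (hIpos t).le
  have hne := hsqrt t
  generalize √(I t) = X at hX hne ⊢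
  rw [← hX]
  field_simp
  ring

end MomentSystem

theorem cubic_quintic_moment_system_general
    (n : ℕ)
    (lam : ℝ → ℝ)
    (I V K J F β : ℝ → ℝ) (hIpos : ∀ t, 0 < I t)
    (hI : ∀ t, HasDerivAt I (V t) t)
    (hV : ∀ t, HasDerivAt V (4 * K t - 2 * (lam t) ^ 2 * I t - 2 * (n : ℝ) * F t) t)
    (hK : ∀ t, HasDerivAt K (-(1 / 2) * (lam t) ^ 2 * V t - 2 * (n : ℝ) * β t * F t) t)
    (hJ : ∀ t, HasDerivAt J (2 * (n : ℝ) * β t * F t) t)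
    (hF : ∀ t, HasDerivAt F
      (2 * (n : ℝ) * β t * (1 + (-4 : ℝ)) * F t + 2 * (n : ℝ) * β t * (-2 : ℝ) * J t) t)
    (hβ : ∀ t, V t = 4 * β t * I t)
    (X : ℝ → ℝ) (hX : ∀ t, X t = (I t) ^ ((1 : ℝ) / 2)) :
    (∀ s t : ℝ,
      (2 * K s * I s - (V s) ^ 2 / 4 = 2 * K t * I t - (V t) ^ 2 / 4) ∧
      (2 * (n : ℝ) * (I s) ^ n * (J s + F s) = 2 * (n : ℝ) * (I t) ^ n * (J t + F t)) ∧
      (2 * (n : ℝ) * (I s) ^ ((n : ℝ) / 2) * (J s + F s / 2)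
        = 2 * (n : ℝ) * (I t) ^ ((n : ℝ) / 2) * (J t + F t / 2))) ∧
    (∀ t, deriv (deriv X) t + (lam t) ^ 2 * X t
      = (2 * K 0 * I 0 - (V 0) ^ 2 / 4) / (X t) ^ 3
        + (2 * (n : ℝ) * (I 0) ^ ((n : ℝ) / 2) * (J 0 + F 0 / 2)) / (X t) ^ (n + 1)
        - (2 * (n : ℝ) * (I 0) ^ n * (J 0 + F 0)) / (X t) ^ (2 * n + 1)) := by
  have hQ1 := eq_of_hasDerivAt_zero (hasDerivAt_ermakov_invariant_eq_zero hI hV hK hβ)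
  have hQp : ∀ s t : ℝ,
      2 * (n : ℝ) * (I s) ^ n * (J s + F s) = 2 * (n : ℝ) * (I t) ^ n * (J t + F t) := by
    intro s t
    have h := eq_of_hasDerivAt_zero (hasDerivAt_rpow_mul_add_eq_zero (c := 1)
      (mul_one _).symm (by norm_num) hIpos hI hJ hF hβ) s t
    rw [rpow_natCast, rpow_natCast] at h
    linear_combination 2 * (n : ℝ) * h
  have hQm : ∀ s t : ℝ,
      2 * (n : ℝ) * (I s) ^ ((n : ℝ) / 2) * (J s + F s / 2)
        = 2 * (n : ℝ) * (I t) ^ ((n : ℝ) / 2) * (J t + F t / 2) := by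
    intro s t
    have h := eq_of_hasDerivAt_zero (hasDerivAt_rpow_mul_add_eq_zero (c := 1 / 2)
      (mul_one_div _ _).symm (by norm_num) hIpos hI hJ hF hβ) s t
    linear_combination 2 * (n : ℝ) * h
  refine ⟨fun s t => ⟨hQ1 s t, hQp s t, hQm s t⟩, fun t => ?_⟩
  have hXsqrt : X = fun t => √(I t) := funext fun t => by rw [hX, sqrt_eq_rpow]
  have hV' : ∀ t, HasDerivAt V (4 * K t - 2 * (lam t) ^ 2 * I t + -2 * n * F t) t := fun t =>
    (hV t).congr_deriv (by ring)
  have hIt := (hIpos t).le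
  have hne : √(I t) ≠ 0 := (sqrt_pos.2 (hIpos t)).ne'
  have hIn : I t ^ n ≠ 0 := pow_ne_zero n (hIpos t).ne'
  have hIhalf : I t ^ ((n : ℝ) / 2) ≠ 0 := (rpow_pos_of_pos (hIpos t) _).ne'
  rw [hXsqrt, width_equation hIpos hI hV', hQ1 0 t, hQp 0 t, hQm 0 t]
  beta_reduce
  rw [pow_succ _ n, sqrt_pow_eq_rpow hIt n, pow_succ _ (2 * n), sqrt_pow_two_mul hIt]
  field_simp
  ring

/-- Cubic–quintic closure of the quadratic-phase moment system (`aF = −4`, `aJ = −2`):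
`Q₁ = 2KI − V²/4`, `Q₊ = 2nIⁿ(J + F)` and `Q₋ = 2nI^{n/2}(J + F/2)` are conserved, and
the width `X = I^{1/2}` satisfies `X'' + λ(t)²X = Q₁/X³ + Q₋/X^{n+1} − Q₊/X^{2n+1}`. -/
theorem cubic_quintic_moment_system
    (n : ℕ) (hn : 1 ≤ n)
    (lam : ℝ → ℝ) (hlam : Continuous lam)
    (I V K J F β : ℝ → ℝ) (hIpos : ∀ t, 0 < I t)
    (hI : ∀ t, HasDerivAt I (V t) t)
    (hV : ∀ t, HasDerivAt V (4 * K t - 2 * (lam t) ^ 2 * I t - 2 * (n : ℝ) * F t) t)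
    (hK : ∀ t, HasDerivAt K (-(1 / 2) * (lam t) ^ 2 * V t - 2 * (n : ℝ) * β t * F t) t)
    (hJ : ∀ t, HasDerivAt J (2 * (n : ℝ) * β t * F t) t)
    (hF : ∀ t, HasDerivAt F
      (2 * (n : ℝ) * β t * (1 + (-4 : ℝ)) * F t + 2 * (n : ℝ) * β t * (-2 : ℝ) * J t) t)
    (hβ : ∀ t, V t = 4 * β t * I t)
    (X : ℝ → ℝ) (hX : ∀ t, X t = (I t) ^ ((1 : ℝ) / 2)) :
    (∀ s t : ℝ,
      (2 * K s * I s - (V s) ^ 2 / 4 = 2 * K t * I t - (V t) ^ 2 / 4) ∧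
      (2 * (n : ℝ) * (I s) ^ n * (J s + F s) = 2 * (n : ℝ) * (I t) ^ n * (J t + F t)) ∧
      (2 * (n : ℝ) * (I s) ^ ((n : ℝ) / 2) * (J s + F s / 2)
        = 2 * (n : ℝ) * (I t) ^ ((n : ℝ) / 2) * (J t + F t / 2))) ∧
    (∀ t, deriv (deriv X) t + (lam t) ^ 2 * X t
      = (2 * K 0 * I 0 - (V 0) ^ 2 / 4) / (X t) ^ 3
        + (2 * (n : ℝ) * (I 0) ^ ((n : ℝ) / 2) * (J 0 + F 0 / 2)) / (X t) ^ (n + 1)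
        - (2 * (n : ℝ) * (I 0) ^ n * (J 0 + F 0)) / (X t) ^ (2 * n + 1)) :=
  cubic_quintic_moment_system_general n lam I V K J F β hIpos hI hV hK hJ hF hβ X hX
end
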